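/- Let q ≥ 2 and let H(z) = [H₀(z),…,H_{q−1}(z)]ᵀ be a Laurent polynomial vector. Define F̃(Φ_H(z)) as the stack of F₁(Φ_H(z)),…,F_{q−1}(Φ_H(z)). Then F̃(Φ_H(z)) factors as D(z) A U(z), where D(z) is the diagonal matrix with diagonal blocks D_k(z) = diag(H_{k−1}(z) conj(H_k(z)),…, H_{k−1}(z) conj(H_{q−1}(z))), A is the 0-1 scalar matrix whose row (k,i) has ones in columns 1, k+1, i+k+1, and U(z) is the (q+1) × (q+1) upper-triangular matrix with first row [1, |H₀(z)|², …, |H_{q−1}(z)|²] and remaining diagonal entries −1 (zeros elsewhere). -/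
import Mathlib


open Matrix Complex

/-- The LP² matrix `Φ_H = [H, I − H H*]` built from the vector of values
`h = H(z)` at a point `z ∈ 𝕋ⁿ`. -/
noncomputable def PhiV {q : ℕ} (h : Fin q → ℂ) : Matrix (Fin q) (Fin (q + 1)) ℂ :=
  Matrix.of fun i j =>
    if hj : j = 0 then h i
    else (if i = j.pred hj then (1 : ℂ) else 0) - h i * (starRingEnd ℂ) (h (j.pred hj))

/-- Row index set for the stacked blocks `F₁, …, F_{q−1}`: pairs `(k, i)`
with `1 ≤ k`, `1 ≤ i` and `i ≤ q − k`. -/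
def RIdx (q : ℕ) :=
  {p : Fin q × Fin q // 1 ≤ (p.1 : ℕ) ∧ 1 ≤ (p.2 : ℕ) ∧ (p.2 : ℕ) ≤ q - (p.1 : ℕ)}

instance (q : ℕ) : Fintype (RIdx q) := by unfold RIdx; infer_instance

instance (q : ℕ) : DecidableEq (RIdx q) := by unfold RIdx; infer_instance

/-- The index `k − 1` (0-based) attached to a row `(k, i)`. -/
def kIdx {q : ℕ} (p : RIdx q) : Fin q :=
  ⟨(p.1.1 : ℕ) - 1, lt_of_le_of_lt (Nat.sub_le _ _) p.1.1.isLt⟩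

/-- The index `i + k − 1` (0-based) attached to a row `(k, i)`. -/
def ikIdx {q : ℕ} (p : RIdx q) : Fin q :=
  ⟨(p.1.2 : ℕ) + (p.1.1 : ℕ) - 1, by
    obtain ⟨hk, hi, hik⟩ := p.2
    have h1 := p.1.1.isLt
    have h2 := p.1.2.isLt
    omega⟩

/-- The stacked matrix `F̃(Φ_H) = [F₁(Φ_H); …; F_{q−1}(Φ_H)]`: row `(k, i)`,
column `j` is `Φ_{k−1, j} ⋅ conj (Φ_{i+k−1, j})`. -/
noncomputable def Ftilde {q : ℕ} (h : Fin q → ℂ) : Matrix (RIdx q) (Fin (q + 1)) ℂ :=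
  fun p j => PhiV h (kIdx p) j * (starRingEnd ℂ) (PhiV h (ikIdx p) j)

/-- The diagonal matrix `D` with diagonal entry `H_{k−1} ⋅ conj (H_{i+k−1})`
at the row `(k, i)` (the blocks `D₁ ⊕ ⋯ ⊕ D_{q−1}`). -/
noncomputable def Dmat {q : ℕ} (h : Fin q → ℂ) : Matrix (RIdx q) (RIdx q) ℂ :=
  Matrix.diagonal fun p => h (kIdx p) * (starRingEnd ℂ) (h (ikIdx p))

/-- The 0-1 scalar matrix `A`: row `(k, i)` has ones exactly in the (1-based)
columns `1`, `k+1` and `i+k+1`, i.e. the 0-based columns `0`, `k` and `i+k`. -/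
def AbigC (q : ℕ) : Matrix (RIdx q) (Fin (q + 1)) ℂ := fun p j =>
  if (j : ℕ) = 0 ∨ (j : ℕ) = (p.1.1 : ℕ) ∨ (j : ℕ) = (p.1.2 : ℕ) + (p.1.1 : ℕ)
  then 1 else 0

/-- The upper triangular matrix `U` with first row `[1, |H₀|², …, |H_{q−1}|²]`,
remaining diagonal entries `−1`, and zeros elsewhere. -/
noncomputable def Umat {q : ℕ} (h : Fin q → ℂ) :
    Matrix (Fin (q + 1)) (Fin (q + 1)) ℂ :=
  Matrix.of fun r j =>
    if r = 0 then
      (if hj : j = 0 then (1 : ℂ) else (Complex.normSq (h (j.pred hj)) : ℂ))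
    else if r = j then (-1 : ℂ) else 0

/-- the factorization `F̃(Φ_H(z)) = D(z) A U(z)`. -/
theorem Ftilde_factorization (q : ℕ) (hq : 2 ≤ q) (h : Fin q → ℂ) :
    Ftilde h = Dmat h * AbigC q * Umat h := by
  ext p j
  obtain ⟨hk1, hi1, hik1⟩ := p.2
  have hlt := p.1.1.isLt
  have hlt2 := p.1.2.isLt
  rw [Matrix.mul_assoc, Dmat, Matrix.diagonal_mul, Matrix.mul_apply, Fin.sum_univ_succ]
  induction j using Fin.cases with
  | zero =>
      simp [Ftilde, PhiV, AbigC, Umat, Fin.succ_ne_zero]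
  | succ m =>
      have hsum : ∑ t : Fin q, AbigC q p t.succ * Umat h t.succ m.succ
          = -(AbigC q p m.succ) := by
        rw [Finset.sum_eq_single m]
        · simp [Umat, Fin.succ_ne_zero]
        · intro t _ ht
          simp [Umat, Fin.succ_ne_zero, Fin.succ_inj, ht]
        · simp
      rw [hsum]
      have hU0 : Umat h 0 m.succ = (Complex.normSq (h m) : ℂ) := by
        simp [Umat, Fin.succ_ne_zero]
      have hA0 : AbigC q p 0 = 1 := by simp [AbigC]
      rw [hU0, hA0, one_mul]
      have hKiff : ((m : ℕ) + 1 = (p.1.1 : ℕ)) ↔ kIdx p = m := by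
        rw [Fin.ext_iff]; simp only [kIdx]; omega
      have hIKiff : ((m : ℕ) + 1 = (p.1.2 : ℕ) + (p.1.1 : ℕ)) ↔ ikIdx p = m := by
        rw [Fin.ext_iff]; simp only [ikIdx]; omega
      have hA : AbigC q p m.succ =
          if kIdx p = m ∨ ikIdx p = m then 1 else 0 := by
        simp only [AbigC, Fin.val_succ, Nat.succ_ne_zero, false_or, hKiff, hIKiff]
      have hne : kIdx p ≠ ikIdx p := by
        simp only [ne_eq, Fin.ext_iff, kIdx, ikIdx]; omega
      have hF : Ftilde h p m.succ =
          ((if kIdx p = m then (1 : ℂ) else 0) - h (kIdx p) * (starRingEnd ℂ) (h m)) *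
           (starRingEnd ℂ)
            ((if ikIdx p = m then (1 : ℂ) else 0) - h (ikIdx p) * (starRingEnd ℂ) (h m)) := by
        simp [Ftilde, PhiV, Fin.succ_ne_zero]
      rw [hF, hA]
      have hn : ((Complex.normSq (h m) : ℂ)) = h m * (starRingEnd ℂ) (h m) :=
        (Complex.mul_conj _).symm
      by_cases hK : kIdx p = m
      · have hIK : ikIdx p ≠ m := fun hh => hne (hh ▸ hK)
        rw [if_pos hK, if_neg hIK, if_pos (Or.inl hK), hn, hK]
        simp only [map_sub, _root_.map_mul, Complex.conj_conj, _root_.map_one, map_zero]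
        ring
      · by_cases hIK : ikIdx p = m
        · rw [if_neg hK, if_pos hIK, if_pos (Or.inr hIK), hn, hIK]
          simp only [map_sub, _root_.map_mul, Complex.conj_conj, _root_.map_one, map_zero]
          ring
        · rw [if_neg hK, if_neg hIK, if_neg (by tauto), hn]
          simp only [map_sub, _root_.map_mul, Complex.conj_conj, _root_.map_one, map_zero]
          ring
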